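/- arXiv:2601.02252 — 3 statements merged into one kernel-verified Lean document; each statement's English description precedes it below -/
import Mathlib

section
/- Let Ψ : ℝⁿ × ℝⁿ → ℝ satisfy: Ψ(·,y) is C² on an open set G, (x,y) ↦ ∇²₁₁Ψ(x,y) is jointly continuous on G × G, Ψ ≥ 0, Ψ(x,x) = 0 for x ∈ G, and ∇²₁₁Ψ(x,x) is positive definite for all x in a compact convex set K ⊆ G. Then there exist δ > 0 and m > 0 such that m‖x−y‖² ≤ Ψ(x,y) for all x, y with y in the δ-neighborhood of K and ‖x−y‖ < δ. -/
/-!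
Since `Ψ(·, y) ≥ 0 = Ψ(y, y)`, the point `y` minimises `Ψ(·, y)`, so its gradient vanishes there
and Taylor's formula along the segment from `y` to `x` bounds `Ψ(x, y)` below by half the least
value of the Hessian form `⟪∇²₁₁Ψ(z, y)(x - y), x - y⟫` on that segment. By compactness of `K` and
uniform continuity of the Hessian, positive definiteness on the diagonal over `K` upgrades to a
uniform bound `c‖v‖² ≤ ⟪∇²₁₁Ψ(z, w) v, v⟫` for all `z, w` in a ball of fixed radius `ρ` around any
point of `K`; for `δ = ρ / 2` both `y` and the whole segment lie in such a ball.
-/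

open scoped RealInnerProductSpace Convex
open Metric Set

lemma sub_le_sub_of_hasDerivAt_le {f g f' g' : ℝ → ℝ} {a b : ℝ}
    (hf : ∀ t ∈ Icc a b, HasDerivAt f (f' t) t) (hg : ∀ t ∈ Icc a b, HasDerivAt g (g' t) t)
    (hle : ∀ t ∈ Icc a b, f' t ≤ g' t) {t : ℝ} (ht : t ∈ Icc a b) :
    f t - f a ≤ g t - g a := by
  have hmono : MonotoneOn (fun s => g s - f s) (Icc a b) :=
    monotoneOn_of_hasDerivWithinAt_nonneg (convex_Icc a b)
      (fun s hs => ((hg s hs).sub (hf s hs)).continuousAt.continuousWithinAt)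
      (fun s hs => ((hg s (interior_subset hs)).sub (hf s (interior_subset hs))).hasDerivWithinAt)
      (fun s hs => sub_nonneg.2 (hle s (interior_subset hs)))
  have := hmono (left_mem_Icc.2 (ht.1.trans ht.2)) ht ht.1
  linarith

lemma taylor_le_of_le_second_deriv {f f' f'' : ℝ → ℝ} {c : ℝ}
    (hf : ∀ t ∈ Icc (0 : ℝ) 1, HasDerivAt f (f' t) t)
    (hf' : ∀ t ∈ Icc (0 : ℝ) 1, HasDerivAt f' (f'' t) t)
    (hc : ∀ t ∈ Icc (0 : ℝ) 1, c ≤ f'' t) :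
    f 0 + f' 0 + c / 2 ≤ f 1 := by
  have hf'_ge : ∀ t ∈ Icc (0 : ℝ) 1, f' 0 + c * t ≤ f' t := fun t ht => by
    have := sub_le_sub_of_hasDerivAt_le (f := fun s => c * s) (f' := fun _ => c)
      (fun s _ => by simpa using (hasDerivAt_id s).const_mul c) hf' hc ht
    linarith
  have := sub_le_sub_of_hasDerivAt_le (f := fun s => f' 0 * s + c / 2 * s ^ 2)
    (f' := fun s => f' 0 + c * s)
    (fun s _ => (((hasDerivAt_id s).const_mul (f' 0)).add
      ((hasDerivAt_pow 2 s).const_mul (c / 2))).congr_deriv (by norm_num; ring))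
    hf hf'_ge (right_mem_Icc.2 zero_le_one)
  norm_num at this
  linarith

section InnerProductSpace

variable {E : Type*} [NormedAddCommGroup E] [InnerProductSpace ℝ E]

lemma taylor_le_of_le_inner_hessian [CompleteSpace E] {g : E → ℝ} {g' : E → E}
    {H : E → E →L[ℝ] E} {x y : E} {c : ℝ}
    (hg : ∀ z ∈ [y -[ℝ] x], HasGradientAt g (g' z) z)
    (hg' : ∀ z ∈ [y -[ℝ] x], HasFDerivAt g' (H z) z)
    (hH : ∀ z ∈ [y -[ℝ] x], c * ‖x - y‖ ^ 2 ≤ ⟪H z (x - y), x - y⟫) :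
    g y + ⟪g' y, x - y⟫ + c / 2 * ‖x - y‖ ^ 2 ≤ g x := by
  set γ : ℝ → E := fun t => AffineMap.lineMap y x t
  have hγ : ∀ t, HasDerivAt γ (x - y) t := fun t => AffineMap.hasDerivAt_lineMap
  have hγseg : ∀ t ∈ Icc (0 : ℝ) 1, γ t ∈ [y -[ℝ] x] := fun t ht =>
    lineMap_mem_segment ℝ y x ht
  have := taylor_le_of_le_second_deriv (f := fun t => g (γ t))
    (f' := fun t => ⟪g' (γ t), x - y⟫) (f'' := fun t => ⟪H (γ t) (x - y), x - y⟫)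
    (fun t ht => (hg _ (hγseg t ht)).hasFDerivAt.comp_hasDerivAt t (hγ t))
    (fun t ht => by
      simpa using ((hg' _ (hγseg t ht)).comp_hasDerivAt t (hγ t)).inner ℝ
        (hasDerivAt_const t (x - y)))
    (fun t ht => hH _ (hγseg t ht))
  simp only [γ, AffineMap.lineMap_apply_zero, AffineMap.lineMap_apply_one] at this
  linarith

lemma IsLocalMin.hasGradientAt_eq_zero [CompleteSpace E] {f : E → ℝ} {f' a : E}
    (h : IsLocalMin f a) (hf : HasGradientAt f f' a) : f' = 0 := by
  simpa using h.hasFDerivAt_eq_zero hf.hasFDerivAt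

lemma IsCompact.exists_pos_mul_sq_norm_le_inner [FiniteDimensional ℝ E] {X : Type*}
    [TopologicalSpace X] {K : Set X} (hK : IsCompact K) {A : X → E →L[ℝ] E}
    (hA : ContinuousOn A K) (hpos : ∀ x ∈ K, ∀ v : E, v ≠ 0 → 0 < ⟪A x v, v⟫) :
    ∃ c > 0, ∀ x ∈ K, ∀ v : E, c * ‖v‖ ^ 2 ≤ ⟪A x v, v⟫ := by
  obtain ⟨c, hc, hmin⟩ := (hK.prod (isCompact_sphere (0 : E) 1)).exists_forall_le'
    (((hA.comp continuousOn_fst (fun p hp => hp.1)).clm_apply continuousOn_snd).inner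
      continuousOn_snd)
    (fun p hp => hpos p.1 hp.1 p.2 (ne_zero_of_mem_unit_sphere ⟨p.2, hp.2⟩))
  refine ⟨c, hc, fun x hx v => ?_⟩
  rcases eq_or_ne v 0 with rfl | hv
  · simp
  have := hmin (x, ‖v‖⁻¹ • v) ⟨hx, by simp [norm_smul, hv]⟩
  simp only [Function.comp_apply, map_smul, real_inner_smul_left, real_inner_smul_right] at this
  field_simp at this
  linarith

lemma le_inner_of_norm_sub_le {A B : E →L[ℝ] E} {c ε : ℝ} {v : E}
    (hA : c * ‖v‖ ^ 2 ≤ ⟪A v, v⟫) (hAB : ‖B - A‖ ≤ ε) :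
    (c - ε) * ‖v‖ ^ 2 ≤ ⟪B v, v⟫ := by
  have hdiff : |⟪(B - A) v, v⟫| ≤ ε * ‖v‖ ^ 2 :=
    calc |⟪(B - A) v, v⟫| ≤ ‖(B - A) v‖ * ‖v‖ := abs_real_inner_le_norm _ _
      _ ≤ ‖B - A‖ * ‖v‖ * ‖v‖ := by gcongr; exact (B - A).le_opNorm v
      _ ≤ ε * ‖v‖ ^ 2 := by rw [sq, ← mul_assoc]; gcongr
  rw [sub_apply, inner_sub_left] at hdiff
  nlinarith [neg_abs_le (⟪B v, v⟫ - ⟪A v, v⟫)]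

lemma IsCompact.exists_coercive_near_diag [FiniteDimensional ℝ E] {G K : Set E}
    (hG : IsOpen G) (hK : IsCompact K) (hKG : K ⊆ G) {H : E → E → E →L[ℝ] E}
    (hH : ContinuousOn (fun p : E × E => H p.1 p.2) (G ×ˢ G))
    (hpos : ∀ x ∈ K, ∀ v : E, v ≠ 0 → 0 < ⟪H x x v, v⟫) :
    ∃ ρ > 0, ∃ c > 0, ∀ x₀ ∈ K, ball x₀ ρ ⊆ G ∧
      ∀ z ∈ ball x₀ ρ, ∀ w ∈ ball x₀ ρ, ∀ v : E, c * ‖v‖ ^ 2 ≤ ⟪H z w v, v⟫ := by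
  obtain ⟨c, hc, hcoer⟩ := hK.exists_pos_mul_sq_norm_le_inner (A := fun x => H x x)
    (hH.comp (continuous_id.prodMk continuous_id).continuousOn fun x hx => ⟨hKG hx, hKG hx⟩)
    hpos
  obtain ⟨r, hr, hrG⟩ := hK.exists_cthickening_subset_open hG hKG
  have hL : IsCompact (cthickening r K) := hK.cthickening
  obtain ⟨ε, hε, hHε⟩ := Metric.uniformContinuousOn_iff.mp
    ((hL.prod hL).uniformContinuousOn_of_continuous (hH.mono (prod_mono hrG hrG)))
    (c / 2) (by positivity)
  refine ⟨min r ε, by positivity, c / 2, by positivity, fun x₀ hx₀ => ?_⟩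
  have hball : ball x₀ (min r ε) ⊆ cthickening r K :=
    ball_subset_closedBall.trans <| (closedBall_subset_closedBall (min_le_left r ε)).trans
      (closedBall_subset_cthickening hx₀ r)
  refine ⟨hball.trans hrG, fun z hz w hw v => ?_⟩
  have hzw : dist (z, w) (x₀, x₀) < ε := by
    rw [Prod.dist_eq, max_lt_iff]
    exact ⟨hz.trans_le (min_le_right r ε), hw.trans_le (min_le_right r ε)⟩
  have hnear := hHε (z, w) ⟨hball hz, hball hw⟩
    (x₀, x₀) ⟨self_subset_cthickening K hx₀, self_subset_cthickening K hx₀⟩ hzw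
  rw [dist_eq_norm] at hnear
  have := le_inner_of_norm_sub_le (hcoer x₀ hx₀ v) hnear.le
  linarith

end InnerProductSpace

lemma exists_segment_subset_ball_of_mem_thickening {F : Type*} [NormedAddCommGroup F]
    [NormedSpace ℝ F] {K : Set F} {δ : ℝ} {x y : F} (hy : y ∈ thickening (δ / 2) K)
    (hxy : ‖x - y‖ < δ / 2) : ∃ x₀ ∈ K, [y -[ℝ] x] ⊆ ball x₀ δ := by
  obtain ⟨x₀, hx₀, hyx₀⟩ := mem_thickening_iff.mp hy
  have hδ : 0 < δ := by linarith [norm_nonneg (x - y)]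
  refine ⟨x₀, hx₀, (convex_ball x₀ δ).segment_subset (mem_ball.2 (by linarith)) ?_⟩
  rw [mem_ball]
  linarith [dist_triangle x y x₀, dist_eq_norm x y]

theorem lower_norm_bound_general {n : ℕ} (G : Set (EuclideanSpace ℝ (Fin n))) (hG : IsOpen G)
    (Ψ : EuclideanSpace ℝ (Fin n) → EuclideanSpace ℝ (Fin n) → ℝ)
    (D₁Ψ : EuclideanSpace ℝ (Fin n) → EuclideanSpace ℝ (Fin n) → EuclideanSpace ℝ (Fin n))
    (HΨ : EuclideanSpace ℝ (Fin n) → EuclideanSpace ℝ (Fin n) →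
      EuclideanSpace ℝ (Fin n) →L[ℝ] EuclideanSpace ℝ (Fin n))
    (hgrad : ∀ y ∈ G, ∀ x ∈ G, HasGradientAt (fun x' => Ψ x' y) (D₁Ψ x y) x)
    (hhess : ∀ y ∈ G, ∀ x ∈ G, HasFDerivAt (fun x' => D₁Ψ x' y) (HΨ x y) x)
    (hHcont : ContinuousOn (fun p : EuclideanSpace ℝ (Fin n) × EuclideanSpace ℝ (Fin n) =>
      HΨ p.1 p.2) (G ×ˢ G))
    (hnonneg : ∀ x y, 0 ≤ Ψ x y) (hdiag : ∀ x ∈ G, Ψ x x = 0)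
    (K : Set (EuclideanSpace ℝ (Fin n))) (hK : IsCompact K)
    (hKG : K ⊆ G)
    (hpos : ∀ x ∈ K, ∀ v : EuclideanSpace ℝ (Fin n), v ≠ 0 → 0 < ⟪HΨ x x v, v⟫) :
    ∃ δ > (0:ℝ), ∃ m > (0:ℝ),
      ∀ x y, y ∈ thickening δ K → ‖x - y‖ < δ → m * ‖x - y‖ ^ 2 ≤ Ψ x y := by
  obtain ⟨ρ, hρ, c, hc, hcoer⟩ := hK.exists_coercive_near_diag hG hKG hHcont hpos
  refine ⟨ρ / 2, by positivity, c / 2, by positivity, fun x y hy hxy => ?_⟩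
  obtain ⟨x₀, hx₀, hseg⟩ := exists_segment_subset_ball_of_mem_thickening hy hxy
  have hsegG : [y -[ℝ] x] ⊆ G := hseg.trans (hcoer x₀ hx₀).1
  have hy₀ : y ∈ ball x₀ ρ := hseg (left_mem_segment ℝ y x)
  have hyG : y ∈ G := hsegG (left_mem_segment ℝ y x)
  have hD₁Ψ : D₁Ψ y y = 0 :=
    IsLocalMin.hasGradientAt_eq_zero (f := fun x' => Ψ x' y)
      (Filter.Eventually.of_forall fun z => (hdiag y hyG).trans_le (hnonneg z y))
      (hgrad y hyG y hyG)
  have := taylor_le_of_le_inner_hessian (g := fun x' => Ψ x' y)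
    (fun z hz => hgrad y hyG z (hsegG hz)) (fun z hz => hhess y hyG z (hsegG hz))
    (fun z hz => (hcoer x₀ hx₀).2 z (hseg hz) y hy₀ (x - y))
  rw [hdiag y hyG, hD₁Ψ, inner_zero_left] at this
  linarith

/-- Lower norm bound: if in addition ∇²₁₁Ψ(x,x) ≻ 0 for all x in a compact
convex K ⊆ G, then there are δ, m > 0 with m‖x−y‖² ≤ Ψ(x,y) for all y in the
δ-neighborhood of K and ‖x−y‖ < δ. -/
theorem lower_norm_bound {n : ℕ} (G : Set (EuclideanSpace ℝ (Fin n))) (hG : IsOpen G)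
    (Ψ : EuclideanSpace ℝ (Fin n) → EuclideanSpace ℝ (Fin n) → ℝ)
    (D₁Ψ : EuclideanSpace ℝ (Fin n) → EuclideanSpace ℝ (Fin n) → EuclideanSpace ℝ (Fin n))
    (HΨ : EuclideanSpace ℝ (Fin n) → EuclideanSpace ℝ (Fin n) →
      EuclideanSpace ℝ (Fin n) →L[ℝ] EuclideanSpace ℝ (Fin n))
    (hgrad : ∀ y ∈ G, ∀ x ∈ G, HasGradientAt (fun x' => Ψ x' y) (D₁Ψ x y) x)
    (hhess : ∀ y ∈ G, ∀ x ∈ G, HasFDerivAt (fun x' => D₁Ψ x' y) (HΨ x y) x)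
    (hHcont : ContinuousOn (fun p : EuclideanSpace ℝ (Fin n) × EuclideanSpace ℝ (Fin n) =>
      HΨ p.1 p.2) (G ×ˢ G))
    (hnonneg : ∀ x y, 0 ≤ Ψ x y) (hdiag : ∀ x ∈ G, Ψ x x = 0)
    (K : Set (EuclideanSpace ℝ (Fin n))) (hK : IsCompact K) (hKconv : Convex ℝ K)
    (hKG : K ⊆ G)
    (hpos : ∀ x ∈ K, ∀ v : EuclideanSpace ℝ (Fin n), v ≠ 0 → 0 < ⟪HΨ x x v, v⟫) :
    ∃ δ > (0:ℝ), ∃ m > (0:ℝ),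
      ∀ x y, y ∈ thickening δ K → ‖x - y‖ < δ → m * ‖x - y‖ ^ 2 ≤ Ψ x y :=
  lower_norm_bound_general G hG Ψ D₁Ψ HΨ hgrad hhess hHcont hnonneg hdiag K hK hKG hpos
end

section
/- Let (Sₙ) be a nonincreasing sequence of nonnegative reals with Sₙ → 0 satisfying, for some α ∈ (1/2, 1) and exponent ρ = (1−θ)/θ with θ ∈ (1/2,1), the dichotomy: for each n, either Sₙ ≤ α S_{n−1}, or Sₙ^{θ/(1−θ)} ≤ C''(S_{n−1} − Sₙ) for a constant C'' > 0. Then there exists C''' > 0 with Sₙ ≤ C''' n^{−(1−θ)/(2θ−1)} for all n ≥ 1. -/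
open Filter

/-- Bernoulli-type inequality for negative exponents: for `0 < t ≤ 1` and `ν > 0`,
`1 + ν (1 - t) ≤ t ^ (-ν)`. -/
lemma bern_key {t ν : ℝ} (hν : 0 < ν) (ht0 : 0 < t) (ht1 : t ≤ 1) :
    1 + ν * (1 - t) ≤ t ^ (-ν) := by
  rcases le_or_gt (1 + ν * (1 - t)) 0 with h | h
  · exact h.trans (Real.rpow_pos_of_pos ht0 _).le
  · set u : ℝ := 1 + ν * (1 - t) with hu
    have hν1 : (0:ℝ) < ν + 1 := by linarith
    have h1 : t ^ (ν / (ν + 1)) * u ^ (1 / (ν + 1)) ≤ ν / (ν + 1) * t + 1 / (ν + 1) * u :=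
      Real.geom_mean_le_arith_mean2_weighted (by positivity) (by positivity) ht0.le h.le
        (by field_simp)
    have h2 : ν / (ν + 1) * t + 1 / (ν + 1) * u = 1 := by
      field_simp [hu]; ring
    rw [h2] at h1
    have h3 : (t ^ (ν / (ν + 1)) * u ^ (1 / (ν + 1))) ^ (ν + 1) ≤ 1 ^ (ν + 1) :=
      Real.rpow_le_rpow (by positivity) h1 (by positivity)
    rw [Real.one_rpow, Real.mul_rpow (by positivity) (by positivity),
      ← Real.rpow_mul ht0.le, ← Real.rpow_mul h.le] at h3
    have e1 : ν / (ν + 1) * (ν + 1) = ν := by field_simp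
    have e2 : 1 / (ν + 1) * (ν + 1) = 1 := by field_simp
    rw [e1, e2, Real.rpow_one] at h3
    -- h3 : t ^ ν * u ≤ 1
    have htν : (0:ℝ) < t ^ ν := Real.rpow_pos_of_pos ht0 _
    have : u ≤ 1 / t ^ ν := by
      rw [le_div_iff₀ htν]; linarith [h3]
    rwa [one_div, ← Real.rpow_neg ht0.le] at this

/-- Convexity/Bernoulli step: for `0 < x ≤ y` and `ν > 0`,
`y^(-ν) + ν y^(-ν-1) (y - x) ≤ x^(-ν)`. -/
lemma bern_step {x y ν : ℝ} (hν : 0 < ν) (hx : 0 < x) (hxy : x ≤ y) :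
    y ^ (-ν) + ν * y ^ (-ν - 1) * (y - x) ≤ x ^ (-ν) := by
  have hy : 0 < y := hx.trans_le hxy
  have ht0 : 0 < x / y := div_pos hx hy
  have ht1 : x / y ≤ 1 := (div_le_one hy).2 hxy
  have key := bern_key hν ht0 ht1
  have hyν : (0:ℝ) < y ^ (-ν) := Real.rpow_pos_of_pos hy _
  have hmul := mul_le_mul_of_nonneg_right key hyν.le
  have hL : (x / y) ^ (-ν) * y ^ (-ν) = x ^ (-ν) := by
    rw [Real.div_rpow hx.le hy.le, div_mul_cancel₀]
    exact hyν.ne'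
  have hR : ν * y ^ (-ν - 1) * (y - x) = ν * (1 - x / y) * y ^ (-ν) := by
    have hy1 : y ^ (-ν - 1) * y = y ^ (-ν) := by
      rw [← Real.rpow_add_one hy.ne' (-ν - 1)]; ring_nf
    have : (1 - x / y) * y = y - x := by field_simp
    calc ν * y ^ (-ν - 1) * (y - x) = ν * (y ^ (-ν - 1) * ((1 - x / y) * y)) := by
          rw [this]; ring
      _ = ν * (1 - x / y) * (y ^ (-ν - 1) * y) := by ring
      _ = ν * (1 - x / y) * y ^ (-ν) := by rw [hy1]
  rw [hL] at hmul
  rw [hR]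
  nlinarith [hmul]

/-- Recursion-to-rate lemma: a nonincreasing nonnegative sequence tending
to 0 satisfying, for θ ∈ (1/2,1) and α ∈ (1/2,1), the dichotomy
Sₙ ≤ α S_{n−1} or Sₙ^{θ/(1−θ)} ≤ C''(S_{n−1}−Sₙ) obeys the sublinear rate
Sₙ ≤ C''' n^{−(1−θ)/(2θ−1)}. -/
theorem sublinear_rate (S : ℕ → ℝ) (θ α C'' : ℝ)
    (hθ : θ ∈ Set.Ioo (1 / 2 : ℝ) 1) (hα : α ∈ Set.Ioo (1 / 2 : ℝ) 1)
    (hC'' : 0 < C'')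
    (hnonneg : ∀ n, 0 ≤ S n) (hmono : ∀ n, S (n + 1) ≤ S n)
    (hlim : Tendsto S atTop (nhds 0))
    (hrec : ∀ n : ℕ, 1 ≤ n →
      S n ≤ α * S (n - 1) ∨ (S n) ^ (θ / (1 - θ)) ≤ C'' * (S (n - 1) - S n)) :
    ∃ C''' > (0:ℝ), ∀ n : ℕ, 1 ≤ n →
      S n ≤ C''' * (n : ℝ) ^ (-(1 - θ) / (2 * θ - 1)) := by
  obtain ⟨hθ1, hθ2⟩ := hθ
  obtain ⟨hα1, hα2⟩ := hα
  have h1θ : (0:ℝ) < 1 - θ := by linarith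
  have h2θ : (0:ℝ) < 2 * θ - 1 := by linarith
  have hα0 : (0:ℝ) < α := by linarith
  set ν : ℝ := (2 * θ - 1) / (1 - θ) with hνdef
  have hν : 0 < ν := div_pos h2θ h1θ
  have hνθ : θ / (1 - θ) = ν + 1 := by
    rw [hνdef]; field_simp; ring
  -- S n ≤ S 0 for all n
  have hle0 : ∀ n, S n ≤ S 0 := by
    intro n
    induction n with
    | zero => exact le_refl _
    | succ k ih => exact (hmono k).trans ih
  rcases le_or_gt (S 0) 0 with hS0 | hS0
  · -- trivial case: S ≡ 0
    refine ⟨1, one_pos, fun n hn => ?_⟩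
    have hnpos : (0:ℝ) < (n : ℝ) := by exact_mod_cast hn
    have : S n ≤ 0 := (hle0 n).trans hS0
    have hp : (0:ℝ) < (n : ℝ) ^ (-(1 - θ) / (2 * θ - 1)) := Real.rpow_pos_of_pos hnpos _
    linarith
  · -- main case
    have hαν : 1 < α ^ (-ν) :=
      (Real.one_lt_rpow_iff_of_pos hα0).2 (Or.inr ⟨hα2, by linarith⟩)
    set μ₁ : ℝ := (α ^ (-ν) - 1) * (S 0) ^ (-ν) with hμ₁def
    set μ₂ : ℝ := ν * α ^ (ν + 1) / C'' with hμ₂def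
    have hμ₁ : 0 < μ₁ := mul_pos (by linarith) (Real.rpow_pos_of_pos hS0 _)
    have hμ₂ : 0 < μ₂ := by
      apply div_pos (mul_pos hν (Real.rpow_pos_of_pos hα0 _)) hC''
    set μ : ℝ := min μ₁ μ₂ with hμdef
    have hμ : 0 < μ := lt_min hμ₁ hμ₂
    -- one-step increment of S^(-ν)
    have step : ∀ n : ℕ, 0 < S (n + 1) → (S n) ^ (-ν) + μ ≤ (S (n + 1)) ^ (-ν) := by
      intro n hpos
      have hSn : 0 < S n := hpos.trans_le (hmono n)
      have hS0n : (S 0) ^ (-ν) ≤ (S n) ^ (-ν) :=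
        Real.rpow_le_rpow_of_nonpos hSn (hle0 n) (by linarith)
      have caseA : S (n + 1) ≤ α * S n → (S n) ^ (-ν) + μ ≤ (S (n + 1)) ^ (-ν) := by
        intro h
        have h1 : (α * S n) ^ (-ν) ≤ (S (n + 1)) ^ (-ν) :=
          Real.rpow_le_rpow_of_nonpos hpos h (by linarith)
        rw [Real.mul_rpow hα0.le hSn.le] at h1
        have h2 : (α ^ (-ν) - 1) * (S 0) ^ (-ν) ≤ (α ^ (-ν) - 1) * (S n) ^ (-ν) :=
          mul_le_mul_of_nonneg_left hS0n (by linarith)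
        have h3 : μ ≤ μ₁ := min_le_left _ _
        nlinarith [h1, h2, h3]
      have hr := hrec (n + 1) (by omega)
      rw [Nat.add_sub_cancel] at hr
      rcases hr with h | h
      · exact caseA h
      · by_cases hab : S (n + 1) ≤ α * S n
        · exact caseA hab
        · push_neg at hab
          rw [hνθ] at h
          have hdiff : α ^ (ν + 1) * (S n) ^ (ν + 1) ≤ C'' * (S n - S (n + 1)) := by
            have := Real.rpow_le_rpow (by positivity) hab.le (by linarith : (0:ℝ) ≤ ν + 1)
            rw [Real.mul_rpow hα0.le hSn.le] at this
            exact this.trans h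
          have hbern := bern_step hν hpos (hmono n)
          have hid : (S n) ^ (-ν - 1) * (S n) ^ (ν + 1) = 1 := by
            rw [← Real.rpow_add hSn]
            norm_num
          have h5 : α ^ (ν + 1) * (S n) ^ (ν + 1) / C'' ≤ S n - S (n + 1) := by
            rw [div_le_iff₀ hC'']; linarith [hdiff]
          have hpos1 : (0:ℝ) ≤ ν * (S n) ^ (-ν - 1) := by positivity
          have h6 := mul_le_mul_of_nonneg_left h5 hpos1
          have h7 : ν * (S n) ^ (-ν - 1) * (α ^ (ν + 1) * (S n) ^ (ν + 1) / C'') = μ₂ := by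
            have e : ν * (S n) ^ (-ν - 1) * (α ^ (ν + 1) * (S n) ^ (ν + 1) / C'')
                = ν * α ^ (ν + 1) / C'' * ((S n) ^ (-ν - 1) * (S n) ^ (ν + 1)) := by
              ring
            rw [e, hid, mul_one]
          rw [h7] at h6
          have h8 : μ ≤ μ₂ := min_le_right _ _
          linarith [hbern, h6, h8]
    -- iterate: S n ^ (-ν) ≥ S 0 ^ (-ν) + μ n whenever S n > 0
    have key : ∀ n : ℕ, 0 < S n → (S 0) ^ (-ν) + μ * n ≤ (S n) ^ (-ν) := by
      intro n
      induction n with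
      | zero => intro _; simp
      | succ k ih =>
        intro hpos
        have hSk : 0 < S k := hpos.trans_le (hmono k)
        have := step k hpos
        have hik := ih hSk
        push_cast
        linarith
    refine ⟨μ ^ (-1 / ν), Real.rpow_pos_of_pos hμ _, fun n hn => ?_⟩
    have hnpos : (0:ℝ) < (n : ℝ) := by exact_mod_cast hn
    have hexp : -(1 - θ) / (2 * θ - 1) = -1 / ν := by
      rw [hνdef]; field_simp
    rcases le_or_gt (S n) 0 with hSn | hSn
    · have hp : (0:ℝ) < μ ^ (-1 / ν) * (n : ℝ) ^ (-(1 - θ) / (2 * θ - 1)) :=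
        mul_pos (Real.rpow_pos_of_pos hμ _) (Real.rpow_pos_of_pos hnpos _)
      linarith
    · have hk := key n hSn
      have hμn : 0 < μ * (n : ℝ) := mul_pos hμ hnpos
      have h9 : μ * (n : ℝ) ≤ (S n) ^ (-ν) := by
        have : 0 < (S 0) ^ (-ν) := Real.rpow_pos_of_pos hS0 _
        linarith
      have h10 : ((S n) ^ (-ν)) ^ (-1 / ν) ≤ (μ * (n : ℝ)) ^ (-1 / ν) :=
        Real.rpow_le_rpow_of_nonpos hμn h9 (by rw [div_nonpos_iff]; exact Or.inr ⟨by norm_num, hν.le⟩)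
      have hL : ((S n) ^ (-ν)) ^ (-1 / ν) = S n := by
        rw [← Real.rpow_mul (hnonneg n)]
        have : -ν * (-1 / ν) = 1 := by field_simp
        rw [this, Real.rpow_one]
      have hR : (μ * (n : ℝ)) ^ (-1 / ν) = μ ^ (-1 / ν) * (n : ℝ) ^ (-1 / ν) :=
        Real.mul_rpow hμ.le hnpos.le
      rw [hL, hR] at h10
      rw [hexp]
      exact h10
end

section
/- Let f be continuous on an open set G, let (x_k) ⊆ G be a bounded sequence with all accumulation points in G, such that f(x_k) is nonincreasing and Ψ(x_{k+1}, x_k) ≤ λ_k (f(x_k) − f(x_{k+1})) with 0 < λ_k ≤ R. If Ψ is jointly continuous, Ψ ≥ 0, and Ψ is separating on a subspace V with orthogonal projection P (i.e., Ψ(x',x) = 0 implies Px' = Px), then P(x_{k+1} − x_k) → 0. -/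
open Filter Set Topology

/-!
Since `f (x k)` decreases and is bounded below by the value of `f` at a cluster point, it
converges, so the descent inequality forces `Ψ (x (k + 1)) (x k) → 0`. Every cluster point
`(a, b)` of the bounded sequence of pairs `(x (k + 1), x k)` then lies in `G ×ˢ G` and satisfies
`Ψ a b = 0`, hence `P a = P b`; by compactness, `P (x (k + 1)) - P (x k)` tends to `0`.
-/

theorem Antitone.le_of_mapClusterPt {ι α : Type*} [Preorder ι] [TopologicalSpace α] [Preorder α]
    [ClosedIicTopology α] {u : ι → α} (hu : Antitone u) {a : α} (ha : MapClusterPt a atTop u)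
    (i : ι) : a ≤ u i :=
  isClosed_Iic.mem_of_mapClusterPt ha ((eventually_ge_atTop i).mono fun _ hj => hu hj)

theorem Antitone.tendsto_sub_succ_of_mapClusterPt {u : ℕ → ℝ} (hu : Antitone u) {a : ℝ}
    (ha : MapClusterPt a atTop u) : Tendsto (fun k => u k - u (k + 1)) atTop (𝓝 0) := by
  have hlim := tendsto_atTop_ciInf hu ⟨a, forall_mem_range.2 (hu.le_of_mapClusterPt ha)⟩
  simpa using hlim.sub (hlim.comp (tendsto_add_atTop_nat 1))

theorem IsCompact.tendsto_comp_of_mapClusterPt {ι X Y : Type*} [TopologicalSpace X]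
    [TopologicalSpace Y] {K : Set X} (hK : IsCompact K) {l : Filter ι} {u : ι → X}
    (hu : ∀ᶠ i in l, u i ∈ K) {φ : X → Y} (hφ : Continuous φ) {b : Y}
    (h : ∀ p, MapClusterPt p l u → φ p = b) : Tendsto (φ ∘ u) l (𝓝 b) :=
  (hφ.tendsto_nhdsSet_nhds (s := {p | φ p = b}) fun _ hp => hp).comp
    (hK.tendsto_nhdsSet_of_mapClusterPt hu fun p _ hp => h p hp)

theorem tendsto_sub_succ_of_separating {E F : Type*} [PseudoMetricSpace E] [ProperSpace E]
    [TopologicalSpace F] [AddGroup F] [ContinuousSub F] {G : Set E} (hG : IsOpen G)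
    {Ψ : E → E → ℝ} (hΨ : ContinuousOn (fun p : E × E => Ψ p.1 p.2) (G ×ˢ G))
    {g : E → F} (hg : Continuous g) (hsep : ∀ a b, a ∈ G → b ∈ G → Ψ a b = 0 → g a = g b)
    {x : ℕ → E} (hbdd : Bornology.IsBounded (range x))
    (hacc : ∀ p, MapClusterPt p atTop x → p ∈ G)
    (hΨx : Tendsto (fun k => Ψ (x (k + 1)) (x k)) atTop (𝓝 0)) :
    Tendsto (fun k => g (x (k + 1)) - g (x k)) atTop (𝓝 0) := by
  set y : ℕ → E × E := fun k => (x (k + 1), x k)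
  have hK : IsCompact (closure (range y)) :=
    ((hbdd.prod hbdd).subset (range_subset_iff.2 fun k => ⟨mem_range_self _, mem_range_self _⟩)
      ).isCompact_closure
  refine hK.tendsto_comp_of_mapClusterPt
    (Eventually.of_forall fun k => subset_closure (mem_range_self k))
    ((hg.comp continuous_fst).sub (hg.comp continuous_snd)) ?_
  rintro ⟨a, b⟩ hab
  have ha : a ∈ G :=
    hacc a ((hab.continuousAt_comp continuous_fst.continuousAt).of_comp (tendsto_add_atTop_nat 1))
  have hb : b ∈ G := hacc b (hab.continuousAt_comp continuous_snd.continuousAt)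
  have hΨclust : MapClusterPt (Ψ a b) atTop fun k => Ψ (x (k + 1)) (x k) :=
    hab.continuousAt_comp (hΨ.continuousAt ((hG.prod hG).mem_nhds ⟨ha, hb⟩))
  have hΨab : Ψ a b = 0 := eq_of_nhds_neBot (ClusterPt.mono hΨclust hΨx)
  simp [hsep a b ha hb hΨab]

theorem projected_steps_tendsto_zero_general {n : ℕ} (G : Set (EuclideanSpace ℝ (Fin n)))
    (hG : IsOpen G)
    (f : EuclideanSpace ℝ (Fin n) → ℝ) (hf : ContinuousOn f G)
    (Ψ : EuclideanSpace ℝ (Fin n) → EuclideanSpace ℝ (Fin n) → ℝ)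
    (hΨcont : ContinuousOn (fun p : EuclideanSpace ℝ (Fin n) × EuclideanSpace ℝ (Fin n) =>
      Ψ p.1 p.2) (G ×ˢ G))
    (hΨnonneg : ∀ x y, 0 ≤ Ψ x y)
    (V : Submodule ℝ (EuclideanSpace ℝ (Fin n)))
    (hsep : ∀ x' x, x' ∈ G → x ∈ G → Ψ x' x = 0 →
      (V.orthogonalProjectionOnto x' : EuclideanSpace ℝ (Fin n)) = V.orthogonalProjectionOnto x)
    (x : ℕ → EuclideanSpace ℝ (Fin n))
    (hbdd : Bornology.IsBounded (Set.range x))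
    (hacc : ∀ p, MapClusterPt p atTop x → p ∈ G)
    (hmono : ∀ k, f (x (k + 1)) ≤ f (x k))
    (lam : ℕ → ℝ) (R : ℝ) (hlamR : ∀ k, lam k ≤ R)
    (hdesc : ∀ k, Ψ (x (k + 1)) (x k) ≤ lam k * (f (x k) - f (x (k + 1)))) :
    Tendsto (fun k => (V.orthogonalProjectionOnto (x (k + 1)) : EuclideanSpace ℝ (Fin n)) -
      V.orthogonalProjectionOnto (x k)) atTop (nhds 0) := by
  obtain ⟨p, -, hp⟩ := hbdd.isCompact_closure.exists_mapClusterPt (f := atTop) (u := x)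
    (tendsto_principal.2 (Eventually.of_forall fun k => subset_closure (mem_range_self k)))
  have hfx : Tendsto (fun k => f (x k) - f (x (k + 1))) atTop (𝓝 0) :=
    (antitone_nat_of_succ_le hmono).tendsto_sub_succ_of_mapClusterPt
      (hp.continuousAt_comp (hf.continuousAt (hG.mem_nhds (hacc p hp))))
  have hΨx : Tendsto (fun k => Ψ (x (k + 1)) (x k)) atTop (𝓝 0) :=
    squeeze_zero (fun k => hΨnonneg _ _)
      (fun k => (hdesc k).trans (mul_le_mul_of_nonneg_right (hlamR k) (sub_nonneg.2 (hmono k))))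
      (by simpa using hfx.const_mul R)
  exact tendsto_sub_succ_of_separating hG hΨcont
    (continuous_subtype_val.comp V.orthogonalProjectionOnto.continuous) hsep hbdd hacc hΨx

/-- If (x_k) ⊆ G is bounded with accumulation points in G, f(x_k) is
nonincreasing, Ψ(x_{k+1},x_k) ≤ λ_k (f(x_k) − f(x_{k+1})) with 0 < λ_k ≤ R, Ψ is jointly
continuous, nonnegative and separating on a subspace V with orthogonal projection P,
then P(x_{k+1} − x_k) → 0. -/
theorem projected_steps_tendsto_zero {n : ℕ} (G : Set (EuclideanSpace ℝ (Fin n)))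
    (hG : IsOpen G)
    (f : EuclideanSpace ℝ (Fin n) → ℝ) (hf : ContinuousOn f G)
    (Ψ : EuclideanSpace ℝ (Fin n) → EuclideanSpace ℝ (Fin n) → ℝ)
    (hΨcont : ContinuousOn (fun p : EuclideanSpace ℝ (Fin n) × EuclideanSpace ℝ (Fin n) =>
      Ψ p.1 p.2) (G ×ˢ G))
    (hΨnonneg : ∀ x y, 0 ≤ Ψ x y)
    (V : Submodule ℝ (EuclideanSpace ℝ (Fin n)))
    (hsep : ∀ x' x, x' ∈ G → x ∈ G → Ψ x' x = 0 →
      (V.orthogonalProjectionOnto x' : EuclideanSpace ℝ (Fin n)) = V.orthogonalProjectionOnto x)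
    (x : ℕ → EuclideanSpace ℝ (Fin n)) (hxG : ∀ k, x k ∈ G)
    (hbdd : Bornology.IsBounded (Set.range x))
    (hacc : ∀ p, MapClusterPt p atTop x → p ∈ G)
    (hmono : ∀ k, f (x (k + 1)) ≤ f (x k))
    (lam : ℕ → ℝ) (R : ℝ) (hlam : ∀ k, 0 < lam k) (hlamR : ∀ k, lam k ≤ R)
    (hdesc : ∀ k, Ψ (x (k + 1)) (x k) ≤ lam k * (f (x k) - f (x (k + 1)))) :
    Tendsto (fun k => (V.orthogonalProjectionOnto (x (k + 1)) : EuclideanSpace ℝ (Fin n)) -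
      V.orthogonalProjectionOnto (x k)) atTop (nhds 0) :=
  projected_steps_tendsto_zero_general G hG f hf Ψ hΨcont hΨnonneg V hsep x hbdd hacc hmono lam R
    hlamR hdesc
end
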